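/- arXiv:1608.02445 — 2 statements merged into one kernel-verified Lean document; each statement's English description precedes it below -/
import Mathlib

section
/- Let H be a complex Hilbert space and π: 𝔻 → B(H) a map on the open unit disk 𝔻 ⊂ ℂ, given by a norm-convergent power series π(z) = ∑_{n≥0} zⁿ Pₙ with Pₙ ∈ B(H), and satisfying π(z̄) = π(z)* and π(zw) = π(z)π(w) for all z, w ∈ 𝔻. Then the coefficients satisfy Pₙ = Pₙ* = Pₙ², and Pₙ Pₘ = 0 whenever n ≠ m; in particular ‖π(z)‖ ≤ 1 for all z ∈ 𝔻. -/
/-!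
Power series coefficients are unique near `0`, so every identity between such series can be read
off coefficientwise. The relation `π z̄ = (π z)*` gives `Pₙ* = Pₙ`. Expanding `π (z w) = π z π w`
first in `z` gives `Pₙ π w = wⁿ Pₙ`, and expanding this in `w` gives `Pₙ Pₘ = δₙₘ Pₙ`.

For the norm, `b = (π z)* π z = π (|z|²)` is self-adjoint, so
`‖b‖ ^ 2 ^ k = ‖b ^ 2 ^ k‖ = ‖π (|z|² ^ 2 ^ k)‖`, which stays bounded because `π` is continuous
at `0`. Hence `‖b‖ ≤ 1`, and `‖π z‖² = ‖b‖` by the C⋆-identity.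
-/

open Filter Topology ComplexConjugate

section PowerSeries

variable {𝕜 E : Type*} [NontriviallyNormedField 𝕜] [NormedAddCommGroup E] [NormedSpace 𝕜 E]

namespace FormalMultilinearSeries

noncomputable def ofCoeff (a : ℕ → E) : FormalMultilinearSeries 𝕜 𝕜 E :=
  fun n => ContinuousMultilinearMap.mkPiRing 𝕜 (Fin n) (a n)

@[simp]
theorem coeff_ofCoeff (a : ℕ → E) (n : ℕ) :
    (ofCoeff a : FormalMultilinearSeries 𝕜 𝕜 E).coeff n = a n := by
  simp [ofCoeff, coeff]

end FormalMultilinearSeries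

theorem hasFPowerSeriesAt_of_hasSum_pow_smul {a : ℕ → E} {f : 𝕜 → E}
    (h : ∀ᶠ z in 𝓝 0, HasSum (fun n => z ^ n • a n) (f z)) :
    HasFPowerSeriesAt f (FormalMultilinearSeries.ofCoeff a) 0 := by
  rw [hasFPowerSeriesAt_iff]
  simpa using h

theorem eq_of_hasSum_pow_smul {a b : ℕ → E} {f : 𝕜 → E}
    (ha : ∀ᶠ z in 𝓝 0, HasSum (fun n => z ^ n • a n) (f z))
    (hb : ∀ᶠ z in 𝓝 0, HasSum (fun n => z ^ n • b n) (f z)) : a = b := by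
  have hseries := (hasFPowerSeriesAt_of_hasSum_pow_smul ha).eq_formalMultilinearSeries
    (hasFPowerSeriesAt_of_hasSum_pow_smul hb)
  funext n
  simpa using congrArg (fun p : FormalMultilinearSeries 𝕜 𝕜 E => p.coeff n) hseries

end PowerSeries

theorem eventually_norm_lt_one : ∀ᶠ z : ℂ in 𝓝 0, ‖z‖ < 1 :=
  (continuous_norm.tendsto' 0 0 norm_zero).eventually (gt_mem_nhds one_pos)

section UnitDisk

variable {A : Type*} {π : ℂ → A} {P : ℕ → A}

theorem isSelfAdjoint_coeff_of_map_conj [NormedAddCommGroup A] [NormedSpace ℂ A]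
    [StarAddMonoid A] [StarModule ℂ A] [ContinuousStar A]
    (hsum : ∀ z : ℂ, ‖z‖ < 1 → HasSum (fun n => z ^ n • P n) (π z))
    (hstar : ∀ z : ℂ, ‖z‖ < 1 → π (conj z) = star (π z)) (n : ℕ) : IsSelfAdjoint (P n) := by
  have hsum_star : ∀ z : ℂ, ‖z‖ < 1 → HasSum (fun n => z ^ n • star (P n)) (π z) := by
    intro z hz
    simpa [hstar z hz, star_smul] using (hsum (conj z) (by simpa using hz)).star
  exact congrFun (eq_of_hasSum_pow_smul (eventually_norm_lt_one.mono hsum_star)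
    (eventually_norm_lt_one.mono hsum)) n

theorem map_pow_succ_of_map_mul [Monoid A]
    (hmul : ∀ z w : ℂ, ‖z‖ < 1 → ‖w‖ < 1 → π (z * w) = π z * π w)
    {w : ℂ} (hw : ‖w‖ < 1) (n : ℕ) : π (w ^ (n + 1)) = π w ^ (n + 1) := by
  induction n with
  | zero => simp
  | succ n ih =>
    have hwn : ‖w ^ (n + 1)‖ < 1 := by
      rw [norm_pow]
      exact pow_lt_one₀ (norm_nonneg w) hw (Nat.succ_ne_zero n)
    rw [pow_succ w, hmul _ _ hwn hw, ih, ← pow_succ]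

section Algebra

variable [NormedRing A] [NormedAlgebra ℂ A]
  (hsum : ∀ z : ℂ, ‖z‖ < 1 → HasSum (fun n => z ^ n • P n) (π z))
  (hmul : ∀ z w : ℂ, ‖z‖ < 1 → ‖w‖ < 1 → π (z * w) = π z * π w)
include hsum hmul

theorem pow_smul_eq_mul_of_map_mul {w : ℂ} (hw : ‖w‖ < 1) (n : ℕ) :
    w ^ n • P n = P n * π w := by
  have h_prod : ∀ z : ℂ, ‖z‖ < 1 → HasSum (fun n => z ^ n • (w ^ n • P n)) (π (z * w)) := by
    intro z hz
    have hzw : ‖z * w‖ < 1 := by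
      rw [norm_mul]
      exact mul_lt_one_of_nonneg_of_lt_one_left (norm_nonneg z) hz hw.le
    simpa [mul_pow, mul_smul] using hsum (z * w) hzw
  have h_mul : ∀ z : ℂ, ‖z‖ < 1 → HasSum (fun n => z ^ n • (P n * π w)) (π (z * w)) := by
    intro z hz
    rw [hmul z w hz hw]
    simpa [smul_mul_assoc] using (hsum z hz).mul_right (π w)
  exact congrFun (eq_of_hasSum_pow_smul (eventually_norm_lt_one.mono h_prod)
    (eventually_norm_lt_one.mono h_mul)) n

theorem coeff_mul_coeff_of_map_mul (n m : ℕ) : P n * P m = if m = n then P n else 0 := by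
  have h_mul : ∀ w : ℂ, ‖w‖ < 1 → HasSum (fun m => w ^ m • (P n * P m)) (P n * π w) := by
    intro w hw
    simpa [mul_smul_comm] using (hsum w hw).mul_left (P n)
  have h_single : ∀ w : ℂ, ‖w‖ < 1 →
      HasSum (fun m => w ^ m • if m = n then P n else 0) (P n * π w) := by
    intro w hw
    rw [← pow_smul_eq_mul_of_map_mul hsum hmul hw n]
    convert hasSum_ite_eq n (w ^ n • P n) using 2 with m
    split_ifs with h <;> simp [h]
  exact congrFun (eq_of_hasSum_pow_smul (eventually_norm_lt_one.mono h_mul)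
    (eventually_norm_lt_one.mono h_single)) m

end Algebra

theorem IsSelfAdjoint.norm_le_one_of_bddAbove_norm_pow_two_pow {B : Type*} [NormedRing B]
    [StarRing B] [CStarRing B] {b : B} (hb : IsSelfAdjoint b)
    (hbdd : BddAbove (Set.range fun k : ℕ => ‖b ^ 2 ^ k‖)) : ‖b‖ ≤ 1 := by
  obtain ⟨C, hC⟩ := hbdd
  by_contra! hb_gt
  obtain ⟨k, hk⟩ := pow_unbounded_of_one_lt C hb_gt
  have h_mono : ‖b‖ ^ k ≤ ‖b‖ ^ 2 ^ k := pow_le_pow_right₀ hb_gt.le Nat.lt_two_pow_self.le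
  have h_bound : ‖b‖ ^ 2 ^ k ≤ C := hb.norm_pow_two_pow k ▸ hC ⟨k, rfl⟩
  linarith

theorem norm_le_one_of_map_mul [NormedRing A] [NormedAlgebra ℂ A] [StarRing A] [CStarRing A]
    (hsum : ∀ z : ℂ, ‖z‖ < 1 → HasSum (fun n => z ^ n • P n) (π z))
    (hstar : ∀ z : ℂ, ‖z‖ < 1 → π (conj z) = star (π z))
    (hmul : ∀ z w : ℂ, ‖z‖ < 1 → ‖w‖ < 1 → π (z * w) = π z * π w)
    {z : ℂ} (hz : ‖z‖ < 1) : ‖π z‖ ≤ 1 := by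
  set w := conj z * z
  have hw : ‖w‖ < 1 := by
    rw [norm_mul, Complex.norm_conj]
    exact mul_lt_one_of_nonneg_of_lt_one_left (norm_nonneg z) hz hz.le
  have h_star_mul : star (π z) * π z = π w := by
    rw [← hstar z hz, hmul _ _ (by simpa using hz) hz]
  have h_pow : ∀ k : ℕ, π w ^ 2 ^ k = π (w ^ 2 ^ k) := fun k => by
    obtain ⟨n, hn⟩ := Nat.exists_eq_succ_of_ne_zero (pow_ne_zero k two_ne_zero)
    rw [hn, map_pow_succ_of_map_mul hmul hw]
  have h_cont : ContinuousAt π 0 :=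
    (hasFPowerSeriesAt_of_hasSum_pow_smul (eventually_norm_lt_one.mono hsum)).continuousAt
  have h_tendsto : Tendsto (fun k : ℕ => ‖π (w ^ 2 ^ k)‖) atTop (𝓝 ‖π 0‖) :=
    (h_cont.tendsto.comp ((tendsto_pow_atTop_nhds_zero_of_norm_lt_one hw).comp
      (tendsto_pow_atTop_atTop_of_one_lt one_lt_two))).norm
  have h_le : ‖π w‖ ≤ 1 := by
    refine IsSelfAdjoint.norm_le_one_of_bddAbove_norm_pow_two_pow ?_ ?_
    · exact h_star_mul ▸ IsSelfAdjoint.star_mul_self (π z)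
    · simpa only [h_pow] using h_tendsto.bddAbove_range
  rw [← h_star_mul, CStarRing.norm_star_mul_self] at h_le
  nlinarith [norm_nonneg (π z)]

end UnitDisk

/-- Let `H` be a complex Hilbert space and `π` a map on the open unit disk with
values in `B(H)`, given by a norm-convergent power series `π z = ∑ zⁿ Pₙ`, satisfying
`π z̄ = (π z)*` and `π (zw) = π z * π w`.  Then the coefficients `Pₙ` are mutually orthogonal
self-adjoint projections, and `‖π z‖ ≤ 1` on the disk. -/
theorem coefficients_are_orthogonal_projections
    (H : Type*) [NormedAddCommGroup H] [InnerProductSpace ℂ H] [CompleteSpace H]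
    (π : ℂ → (H →L[ℂ] H)) (P : ℕ → (H →L[ℂ] H))
    (hsum : ∀ z : ℂ, ‖z‖ < 1 → HasSum (fun n : ℕ => z ^ n • P n) (π z))
    (hstar : ∀ z : ℂ, ‖z‖ < 1 → π (starRingEnd ℂ z) = ContinuousLinearMap.adjoint (π z))
    (hmul : ∀ z w : ℂ, ‖z‖ < 1 → ‖w‖ < 1 → π (z * w) = π z * π w) :
    (∀ n : ℕ, IsSelfAdjoint (P n) ∧ IsIdempotentElem (P n)) ∧
    (∀ n m : ℕ, n ≠ m → P n * P m = 0) ∧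
    (∀ z : ℂ, ‖z‖ < 1 → ‖π z‖ ≤ 1) := by
  have hstar' : ∀ z : ℂ, ‖z‖ < 1 → π (conj z) = star (π z) := fun z hz =>
    (hstar z hz).trans (ContinuousLinearMap.star_eq_adjoint _).symm
  refine ⟨fun n => ⟨isSelfAdjoint_coeff_of_map_conj hsum hstar' n, ?_⟩, fun n m hnm => ?_,
    fun z hz => norm_le_one_of_map_mul hsum hstar' hmul hz⟩
  · simpa [IsIdempotentElem] using coeff_mul_coeff_of_map_mul hsum hmul n n
  · simpa [Ne.symm hnm] using coeff_mul_coeff_of_map_mul hsum hmul n m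
end

section
/- Let H be an infinite-dimensional Hilbert space with orthonormal basis (e_j)_{j∈J}, and let P ∈ B(H ⊗ H) be the orthogonal projection onto the closed span of {e_j ⊗ e_j : j ∈ J}. Then P commutes with the flip operator on H ⊗ H but P is not contained in the spatial tensor product B(H) ⊗̄ B(H) (the C*-tensor product with minimal norm, realized on H ⊗ H). -/
/-!
The flip is self-adjoint and leaves the closed span of the `e j ⊗ e j` invariant, so it commutes
with the orthogonal projection `P` onto that span.

For a unit vector `f` let `R_f v = v ⊗ f`. The slice map `T ↦ R_f* T R_f` is a contraction that
sends `A ⊗ B` to `⟪f, B f⟫ A`, so the slices at the `e j` of a finite sum of elementary tensors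
stay in a bounded part of a fixed finite-dimensional space. The slice of `P` at `e j` is the
projection onto `ℂ e j`; these are pairwise at distance at least `1`, and infinitely many of
them cannot be approximated within `1/3` by a totally bounded family.
-/

open scoped InnerProductSpace
open ContinuousLinearMap Submodule

theorem IsSelfAdjoint.commute_of_mul_mul_eq {R : Type*} [Semigroup R] [StarMul R] {p t : R}
    (hp : IsSelfAdjoint p) (ht : IsSelfAdjoint t) (h : p * t * p = t * p) : Commute p t := by
  have h' := congrArg star h
  rw [star_mul, star_mul, star_mul, hp.star_eq, ht.star_eq, ← mul_assoc] at h'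
  exact h'.symm.trans h

theorem TotallyBounded.exists_ne_dist_lt {X ι : Type*} [PseudoMetricSpace X] [Infinite ι]
    {s : Set X} (hs : TotallyBounded s) {f : ι → X} (hf : ∀ i, f i ∈ s) {ε : ℝ}
    (hε : 0 < ε) :
    ∃ i j, i ≠ j ∧ dist (f i) (f j) < ε := by
  obtain ⟨c, hc, hcover⟩ := Metric.totallyBounded_iff.1 hs (ε / 2) (half_pos hε)
  have : Finite c := hc
  have hnear : ∀ i, ∃ y ∈ c, dist (f i) y < ε / 2 := fun i => by
    simpa using hcover (hf i)
  choose y hyc hy using hnear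
  obtain ⟨i, j, hij, hyij⟩ := Finite.exists_ne_map_eq_of_infinite fun i => (⟨y i, hyc i⟩ : c)
  refine ⟨i, j, hij, ?_⟩
  calc dist (f i) (f j) ≤ dist (f i) (y i) + dist (f j) (y j) := by
        rw [show y i = y j from congrArg Subtype.val hyij]; exact dist_triangle_right _ _ _
    _ < ε / 2 + ε / 2 := add_lt_add (hy i) (hy j)
    _ = ε := add_halves ε

section InnerProduct

variable {𝕜 E : Type*} [RCLike 𝕜] [NormedAddCommGroup E] [InnerProductSpace 𝕜 E]

theorem Orthonormal.starProjection_topologicalClosure_span [CompleteSpace E] {ι : Type*}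
    {b : ι → E} (hb : Orthonormal 𝕜 b) {x : E} {j : ι} (hx : ∀ k ≠ j, ⟪b k, x⟫_𝕜 = 0) :
    (span 𝕜 (Set.range b)).topologicalClosure.starProjection x = ⟪b j, x⟫_𝕜 • b j := by
  classical
  refine eq_starProjection_of_mem_orthogonal
    (le_topologicalClosure _ (smul_mem _ _ (subset_span ⟨j, rfl⟩))) ?_
  rw [orthogonal_closure]
  have : span 𝕜 (Set.range b) ≤ (𝕜 ∙ (x - ⟪b j, x⟫_𝕜 • b j))ᗮ := by
    rw [span_le]
    rintro _ ⟨k, rfl⟩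
    rw [SetLike.mem_coe, mem_orthogonal_singleton_iff_inner_left, inner_sub_right,
      inner_smul_right, orthonormal_iff_ite.1 hb]
    by_cases hkj : k = j
    · subst hkj; simp
    · simp [hkj, hx k hkj]
  exact (span_singleton_le_iff_mem _ _).1 (isOrtho_comm.1 this)

variable [CompleteSpace E]

theorem ContinuousLinearMap.isSelfAdjoint_of_inner_eq_on {s : Set E}
    (hs : Dense (span 𝕜 s : Set E)) {T : E →L[𝕜] E}
    (h : ∀ x ∈ s, ∀ y ∈ s, ⟪T x, y⟫_𝕜 = ⟪x, T y⟫_𝕜) : IsSelfAdjoint T := by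
  refine isSelfAdjoint_iff'.2 (ext_on hs fun x hx => ext_inner_right 𝕜 fun y => ?_)
  have : (innerSL 𝕜 x).comp T = innerSL 𝕜 (T x) := ext_on hs fun y hy => (h x hx y hy).symm
  rw [adjoint_inner_left]
  exact DFunLike.congr_fun this y

theorem ContinuousLinearMap.eq_starProjection_of_isSelfAdjoint {P : E →L[𝕜] E}
    (hP : IsSelfAdjoint P) {U : Submodule 𝕜 E} [U.HasOrthogonalProjection]
    (hrange : ∀ x, P x ∈ U) (hfix : ∀ x ∈ U, P x = x) : P = U.starProjection :=
  ContinuousLinearMap.ext fun x => (eq_starProjection_of_mem_of_inner_eq_zero (hrange x)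
    fun w hw => by
      have hsymm : ⟪P x, w⟫_𝕜 = ⟪x, P w⟫_𝕜 := hP.isSymmetric x w
      rw [inner_sub_left, hsymm, hfix w hw, sub_self]).symm

theorem Submodule.commute_starProjection_of_mem_invtSubmodule {U : Submodule 𝕜 E}
    [U.HasOrthogonalProjection] {T : E →L[𝕜] E} (hT : IsSelfAdjoint T)
    (hU : U ∈ Module.End.invtSubmodule (T : E →ₗ[𝕜] E)) : Commute U.starProjection T :=
  (isSelfAdjoint_starProjection U).commute_of_mul_mul_eq hT <| ContinuousLinearMap.ext fun x =>
    (starProjection_eq_self_iff (K := U)).2 (hU (U.starProjection_apply_mem x))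

end InnerProduct

theorem notMem_closure_span_of_pairwise_le_norm_sub {𝕜 X Y ι : Type*} [RCLike 𝕜]
    [NormedAddCommGroup X] [NormedSpace 𝕜 X] [NormedAddCommGroup Y] [NormedSpace 𝕜 Y]
    [Infinite ι] (Φ : ι → X →ₗ[𝕜] Y) (hΦ : ∀ i x, ‖Φ i x‖ ≤ ‖x‖) {S : Set X}
    (hS : ∀ s ∈ S, ∃ y : Y, ∀ i, Φ i s ∈ 𝕜 ∙ y) {x : X} {δ : ℝ} (hδ : 0 < δ)
    (hx : Pairwise fun i j => δ ≤ ‖Φ i x - Φ j x‖) : x ∉ closure (span 𝕜 S : Set X) := by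
  intro hmem
  obtain ⟨T, hT, hxT⟩ := Metric.mem_closure_iff.1 hmem (δ / 3) (by positivity)
  obtain ⟨t, htS, hTt⟩ := mem_span_finite_of_mem_span hT
  choose! y hy using hS
  let V := span 𝕜 (y '' t)
  have : FiniteDimensional 𝕜 V := FiniteDimensional.span_of_finite 𝕜 (t.finite_toSet.image y)
  have hTV (i : ι) : Φ i T ∈ V := by
    refine (span_le (p := V.comap (Φ i))).2 (fun s hs => ?_) hTt
    exact span_mono (Set.singleton_subset_iff.2 (Set.mem_image_of_mem y hs)) (hy s (htS hs) i)
  obtain ⟨i, j, hij, hTij⟩ := (isCompact_closedBall (0 : V) ‖T‖).totallyBounded.exists_ne_dist_lt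
    (f := fun i => ⟨Φ i T, hTV i⟩) (fun i => by simpa using hΦ i T) (by positivity : 0 < δ / 3)
  rw [Subtype.dist_eq, dist_eq_norm] at hTij
  rw [dist_eq_norm] at hxT
  refine lt_irrefl δ ?_
  calc δ ≤ ‖Φ i x - Φ j x‖ := hx hij
    _ = ‖Φ i (x - T) + (Φ i T - Φ j T) + Φ j (T - x)‖ := by
        simp only [map_sub]; congr 1; abel
    _ ≤ ‖x - T‖ + ‖Φ i T - Φ j T‖ + ‖T - x‖ := by
        refine norm_add₃_le.trans ?_
        gcongr <;> exact hΦ _ _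
    _ < δ := by rw [norm_sub_rev T x]; linarith

section TensorModel

variable {H K : Type*} [NormedAddCommGroup K] [InnerProductSpace ℂ K]

abbrev diagonalSubspace {J : Type*} (tpv : H → H → K) (b : J → H) : Submodule ℂ K :=
  (span ℂ (Set.range fun j => tpv (b j) (b j))).topologicalClosure

theorem diagonalSubspace_mem_invtSubmodule {J : Type*} {tpv : H → H → K} (b : J → H)
    {τ : K →L[ℂ] K} (hτ : ∀ u v, τ (tpv u v) = tpv v u) :
    diagonalSubspace tpv b ∈ Module.End.invtSubmodule (τ : K →ₗ[ℂ] K) := by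
  refine topologicalClosure_mem_invtSubmodule ?_
  rw [Module.End.mem_invtSubmodule_iff_map_le, map_span_le]
  rintro _ ⟨j, rfl⟩
  exact subset_span ⟨j, (hτ _ _).symm⟩

variable [NormedAddCommGroup H] [InnerProductSpace ℂ H] {tpv : H → H → K}
  (htpv : ∀ u v u' v' : H, ⟪tpv u v, tpv u' v'⟫_ℂ = ⟪u, u'⟫_ℂ * ⟪v, v'⟫_ℂ)
include htpv

theorem tpv_add_left (u u' v : H) : tpv (u + u') v = tpv u v + tpv u' v := by
  rw [← sub_eq_zero, ← inner_self_eq_zero (𝕜 := ℂ)]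
  simp only [inner_sub_left, inner_sub_right, inner_add_left, inner_add_right, htpv]
  ring

theorem tpv_smul_left (c : ℂ) (u v : H) : tpv (c • u) v = c • tpv u v := by
  rw [← sub_eq_zero, ← inner_self_eq_zero (𝕜 := ℂ)]
  simp only [inner_sub_left, inner_sub_right, inner_smul_left, inner_smul_right, htpv]
  ring

theorem norm_tpv (u v : H) : ‖tpv u v‖ = ‖u‖ * ‖v‖ := by
  have h := htpv u v u v
  simp only [inner_self_eq_norm_sq_to_K] at h
  exact_mod_cast (pow_left_inj₀ (norm_nonneg _) (by positivity) two_ne_zero).1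
    (by rw [mul_pow]; exact_mod_cast h)

theorem isSelfAdjoint_flip [CompleteSpace K]
    (hdense : Dense (span ℂ {x : K | ∃ u v : H, x = tpv u v} : Set K))
    {τ : K →L[ℂ] K} (hτ : ∀ u v, τ (tpv u v) = tpv v u) : IsSelfAdjoint τ := by
  refine isSelfAdjoint_of_inner_eq_on hdense ?_
  rintro _ ⟨a, b, rfl⟩ _ ⟨c, d, rfl⟩
  rw [hτ, hτ, htpv, htpv, mul_comm]

theorem orthonormal_tpv_diag {J : Type*} {b : J → H} (hb : Orthonormal ℂ b) :
    Orthonormal ℂ fun j => tpv (b j) (b j) := by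
  classical
  rw [orthonormal_iff_ite] at hb ⊢
  intro i j
  rw [htpv, hb]
  split_ifs <;> simp

noncomputable def tensorRightCLM (f : H) : H →L[ℂ] K :=
  LinearMap.mkContinuous
    { toFun := fun v => tpv v f
      map_add' := fun u u' => tpv_add_left htpv u u' f
      map_smul' := fun c u => tpv_smul_left htpv c u f }
    ‖f‖ fun v => by simp [norm_tpv htpv, mul_comm]

@[simp]
theorem tensorRightCLM_apply (f v : H) : tensorRightCLM htpv f v = tpv v f := rfl

theorem norm_tensorRightCLM_le (f : H) : ‖tensorRightCLM htpv f‖ ≤ ‖f‖ :=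
  LinearMap.mkContinuous_norm_le _ (norm_nonneg f) _

variable [CompleteSpace H] [CompleteSpace K]

theorem adjoint_tensorRightCLM_apply (f u w : H) :
    adjoint (tensorRightCLM htpv f) (tpv u w) = ⟪f, w⟫_ℂ • u :=
  ext_inner_left ℂ fun z => by
    rw [adjoint_inner_right, tensorRightCLM_apply, htpv, inner_smul_right, mul_comm]

noncomputable def tensorSlice (f : H) : (K →L[ℂ] K) →ₗ[ℂ] (H →L[ℂ] H) where
  toFun T := adjoint (tensorRightCLM htpv f) ∘L T ∘L tensorRightCLM htpv f
  map_add' S T := by simp only [add_comp, comp_add]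
  map_smul' c T := by simp only [smul_comp, comp_smul, RingHom.id_apply]

theorem tensorSlice_apply (f : H) (T : K →L[ℂ] K) (v : H) :
    tensorSlice htpv f T v = adjoint (tensorRightCLM htpv f) (T (tpv v f)) := rfl

theorem norm_tensorSlice_le {f : H} (hf : ‖f‖ ≤ 1) (T : K →L[ℂ] K) :
    ‖tensorSlice htpv f T‖ ≤ ‖T‖ := by
  have hR := (norm_tensorRightCLM_le htpv f).trans hf
  calc ‖tensorSlice htpv f T‖
      ≤ ‖adjoint (tensorRightCLM htpv f)‖ * (‖T‖ * ‖tensorRightCLM htpv f‖) :=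
        (opNorm_comp_le _ _).trans (by gcongr; exact opNorm_comp_le _ _)
    _ ≤ 1 * (‖T‖ * 1) := by rw [LinearIsometryEquiv.norm_map]; gcongr
    _ = ‖T‖ := by ring

theorem tensorSlice_eq_smul_of_apply_tpv {T : K →L[ℂ] K} {A B : H →L[ℂ] H}
    (hT : ∀ u v, T (tpv u v) = tpv (A u) (B v)) (f : H) :
    tensorSlice htpv f T = ⟪f, B f⟫_ℂ • A := by
  ext v
  rw [tensorSlice_apply, hT, adjoint_tensorRightCLM_apply]
  rfl

theorem tensorSlice_starProjection_diagonalSubspace_apply {J : Type*} {b : J → H}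
    (hb : Orthonormal ℂ b) (j : J) (v : H) :
    tensorSlice htpv (b j) (diagonalSubspace tpv b).starProjection v = ⟪b j, v⟫_ℂ • b j := by
  have hbj : ⟪b j, b j⟫_ℂ = 1 := inner_self_eq_one_of_norm_eq_one (hb.1 j)
  rw [tensorSlice_apply, (orthonormal_tpv_diag htpv hb).starProjection_topologicalClosure_span
    fun k hkj => by rw [htpv, hb.2 hkj, mul_zero], map_smul, adjoint_tensorRightCLM_apply, htpv,
    hbj, mul_one, one_smul]

theorem one_le_norm_tensorSlice_sub_tensorSlice {J : Type*} {b : J → H}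
    (hb : Orthonormal ℂ b) {i j : J} (hij : i ≠ j) :
    1 ≤ ‖tensorSlice htpv (b i) (diagonalSubspace tpv b).starProjection -
      tensorSlice htpv (b j) (diagonalSubspace tpv b).starProjection‖ := by
  set D := tensorSlice htpv (b i) (diagonalSubspace tpv b).starProjection -
    tensorSlice htpv (b j) (diagonalSubspace tpv b).starProjection
  have hD : D (b i) = b i := by
    rw [sub_apply, tensorSlice_starProjection_diagonalSubspace_apply htpv hb,
      tensorSlice_starProjection_diagonalSubspace_apply htpv hb, hb.2 hij.symm,
      inner_self_eq_one_of_norm_eq_one (hb.1 i), zero_smul, one_smul, sub_zero]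
  simpa [hD, hb.1 i] using le_opNorm D (b i)

end TensorModel

theorem projection_not_in_spatial_tensor_product_general
    (H : Type*) [NormedAddCommGroup H] [InnerProductSpace ℂ H] [CompleteSpace H]
    (K : Type*) [NormedAddCommGroup K] [InnerProductSpace ℂ K] [CompleteSpace K]
    (J : Type*) [Infinite J] (e : HilbertBasis J ℂ H)
    (tpv : H → H → K)
    (htpv_inner : ∀ u v u' v' : H,
      (inner ℂ (tpv u v) (tpv u' v') : ℂ) = (inner ℂ u u' : ℂ) * (inner ℂ v v' : ℂ))
    (htpv_dense : Dense
      (↑(Submodule.span ℂ {x : K | ∃ u v : H, x = tpv u v}) : Set K))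
    (tp : (H →L[ℂ] H) → (H →L[ℂ] H) → (K →L[ℂ] K))
    (htp : ∀ (A B : H →L[ℂ] H) (u v : H), tp A B (tpv u v) = tpv (A u) (B v))
    (τ : K →L[ℂ] K) (hτ : ∀ u v : H, τ (tpv u v) = tpv v u)
    (P : K →L[ℂ] K)
    (hP_sa : IsSelfAdjoint P)
    (hP_range : ∀ x : K,
      P x ∈ closure (↑(Submodule.span ℂ (Set.range fun j : J => tpv (e j) (e j))) : Set K))
    (hP_fix : ∀ x ∈ closure
      (↑(Submodule.span ℂ (Set.range fun j : J => tpv (e j) (e j))) : Set K), P x = x) :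
    P * τ = τ * P ∧
    P ∉ closure
      (↑(Submodule.span ℂ {T : K →L[ℂ] K | ∃ A B : H →L[ℂ] H, T = tp A B}) :
        Set (K →L[ℂ] K)) := by
  have hP : P = (diagonalSubspace tpv e).starProjection :=
    eq_starProjection_of_isSelfAdjoint hP_sa hP_range hP_fix
  have hτ_sa : IsSelfAdjoint τ := isSelfAdjoint_flip htpv_inner htpv_dense hτ
  refine ⟨hP ▸ (commute_starProjection_of_mem_invtSubmodule hτ_sa
    (diagonalSubspace_mem_invtSubmodule e hτ)).eq, ?_⟩
  refine notMem_closure_span_of_pairwise_le_norm_sub (fun j => tensorSlice htpv_inner (e j))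
    (fun j => norm_tensorSlice_le htpv_inner (e.orthonormal.1 j).le) ?_ one_pos ?_
  · rintro _ ⟨A, B, rfl⟩
    exact ⟨A, fun j => tensorSlice_eq_smul_of_apply_tpv htpv_inner (htp A B) (e j) ▸
      smul_mem _ _ (mem_span_singleton_self A)⟩
  · intro i j hij
    rw [hP]
    exact one_le_norm_tensorSlice_sub_tensorSlice htpv_inner e.orthonormal hij

/-- Let `H` be an infinite-dimensional Hilbert space with orthonormal basis
`(e_j)_{j ∈ J}` and `P` the orthogonal projection of `H ⊗ H` onto the closed span of
`{e_j ⊗ e_j}`.  Then `P` commutes with the flip, but `P` does not belong to the spatial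
tensor product `B(H) ⊗̄ B(H)` (the norm closure of the span of elementary tensor operators).
The Hilbert tensor product `H ⊗ H` is modelled by a Hilbert space `K` together with an
elementary-tensor map `tpv` on vectors and `tp` on operators. -/
theorem projection_not_in_spatial_tensor_product
    (H : Type*) [NormedAddCommGroup H] [InnerProductSpace ℂ H] [CompleteSpace H]
    (K : Type*) [NormedAddCommGroup K] [InnerProductSpace ℂ K] [CompleteSpace K]
    (J : Type*) [Infinite J] (e : HilbertBasis J ℂ H)
    (tpv : H → H → K)
    (htpv_inner : ∀ u v u' v' : H,
      (inner ℂ (tpv u v) (tpv u' v') : ℂ) = (inner ℂ u u' : ℂ) * (inner ℂ v v' : ℂ))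
    (htpv_dense : Dense
      (↑(Submodule.span ℂ {x : K | ∃ u v : H, x = tpv u v}) : Set K))
    (tp : (H →L[ℂ] H) → (H →L[ℂ] H) → (K →L[ℂ] K))
    (htp : ∀ (A B : H →L[ℂ] H) (u v : H), tp A B (tpv u v) = tpv (A u) (B v))
    (τ : K →L[ℂ] K) (hτ : ∀ u v : H, τ (tpv u v) = tpv v u)
    (P : K →L[ℂ] K)
    (hP_sa : IsSelfAdjoint P) (hP_idem : IsIdempotentElem P)
    (hP_range : ∀ x : K,
      P x ∈ closure (↑(Submodule.span ℂ (Set.range fun j : J => tpv (e j) (e j))) : Set K))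
    (hP_fix : ∀ x ∈ closure
      (↑(Submodule.span ℂ (Set.range fun j : J => tpv (e j) (e j))) : Set K), P x = x) :
    P * τ = τ * P ∧
    P ∉ closure
      (↑(Submodule.span ℂ {T : K →L[ℂ] K | ∃ A B : H →L[ℂ] H, T = tp A B}) :
        Set (K →L[ℂ] K)) :=
  projection_not_in_spatial_tensor_product_general H K J e tpv htpv_inner htpv_dense tp htp τ hτ P
    hP_sa hP_range hP_fix
end
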